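/- Let a_r > 0 denote the leading coefficient of P. There exist constants C > 0 and x₀ > 0 such that for all x ∈ (0, x₀), | Σ_{ℓ ≥ 1} f(ℓ)/(e^{f(ℓ)x} − 1) − ζ(1 + 1/r)·Γ(1 + 1/r) / (r · a_r^{1/r} · x^{1+1/r}) | ≤ C · x^{−1−1/(2r)}. -/

import Mathlib

/-!
Write `bose x u = u / (e^{u x} - 1)`: it is antitone in `u > 0` and bounded by `1 / x`. Since
`f(ℓ)` lies between `a (ℓ - B)^r` and `a (ℓ + B)^r` for some shift `B` and all large `ℓ`, the sum
is squeezed between shifted sums of the antitone function `g t = bose x (a t^r)`, and the integral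
test compares both with `∫₀^∞ g` up to `O(B / x)`. The substitution `z = a x t^r` and the
expansion `1 / (e^z - 1) = ∑ e^{-(n+1) z}` give
`∫₀^∞ g = Γ(1 + 1/r) ζ(1 + 1/r) / (r a^{1/r} x^{1 + 1/r})`. The error is thus `O(1 / x)`, which is
below `x^{-1 - 1/(2r)}` for `x < 1`.
-/

open Real Set MeasureTheory Polynomial

noncomputable def bose (x u : ℝ) : ℝ := u / (exp (u * x) - 1)

section Bose

variable {x u : ℝ}

lemma exp_sub_one_pos_of_pos (hu : 0 < u) : 0 < exp u - 1 :=
  sub_pos.2 (one_lt_exp_iff.2 hu)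

lemma bose_pos (hx : 0 < x) (hu : 0 < u) : 0 < bose x u :=
  div_pos hu (exp_sub_one_pos_of_pos (mul_pos hu hx))

lemma bose_le_inv (hx : 0 < x) (hu : 0 < u) : bose x u ≤ x⁻¹ := by
  have hux : u * x ≤ exp (u * x) - 1 := by linarith [add_one_le_exp (u * x)]
  calc bose x u ≤ u / (u * x) := div_le_div_of_nonneg_left hu.le (by positivity) hux
    _ = x⁻¹ := by field_simp

lemma bose_le_div_sq (hx : 0 < x) (hu : 0 < u) : bose x u ≤ 6 / (x ^ 3 * u ^ 2) := by
  have hux : (u * x) ^ 3 / 6 ≤ exp (u * x) - 1 := by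
    have := sum_le_exp_of_nonneg (mul_pos hu hx).le 4
    simp only [Finset.sum_range_succ, Finset.sum_range_zero, Nat.factorial] at this
    nlinarith [pow_pos (mul_pos hu hx) 2]
  calc bose x u ≤ u / ((u * x) ^ 3 / 6) := div_le_div_of_nonneg_left hu.le (by positivity) hux
    _ = 6 / (x ^ 3 * u ^ 2) := by field_simp

lemma bose_antitoneOn (hx : 0 < x) : AntitoneOn (bose x) (Ioi 0) := by
  intro u (hu : 0 < u) v (hv : 0 < v) huv
  have slope := convexOn_exp.secant_mono (mem_univ 0) (mem_univ (u * x)) (mem_univ (v * x))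
    (by positivity) (by positivity) (mul_le_mul_of_nonneg_right huv hx.le)
  simp only [exp_zero, sub_zero] at slope
  -- `bose x w` is the reciprocal of `x` times the secant slope of `exp` between `0` and `w x`
  have hbose : ∀ w, 0 < w → bose x w = (x * ((exp (w * x) - 1) / (w * x)))⁻¹ := fun w hw => by
    unfold bose; field_simp
  rw [hbose u hu, hbose v hv]
  have := exp_sub_one_pos_of_pos (mul_pos hu hx)
  gcongr

lemma integrableOn_bose_mul_pow {a : ℝ} {d : ℕ} (hd : d ≠ 0) (ha : 0 < a) (hx : 0 < x) :
    IntegrableOn (fun t => bose x (a * t ^ d)) (Ioi 0) := by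
  have hmeas : AEStronglyMeasurable (fun t => bose x (a * t ^ d)) :=
    (by unfold bose; fun_prop : Measurable fun t => bose x (a * t ^ d)).aestronglyMeasurable
  rw [← Ioc_union_Ioi_eq_Ioi zero_le_one]
  refine IntegrableOn.union ?_ ?_
  · refine Integrable.mono' (integrableOn_const (C := x⁻¹) measure_Ioc_lt_top.ne)
      hmeas.restrict (ae_restrict_of_forall_mem measurableSet_Ioc fun t ht => ?_)
    have : 0 < a * t ^ d := mul_pos ha (pow_pos ht.1 d)
    rw [norm_of_nonneg (bose_pos hx this).le]
    exact bose_le_inv hx this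
  · refine Integrable.mono' ((integrableOn_Ioi_rpow_of_lt (by norm_num : (-2 : ℝ) < -1)
      one_pos).const_mul (6 / (x ^ 3 * a ^ 2))) hmeas.restrict
      (ae_restrict_of_forall_mem measurableSet_Ioi fun t (ht : 1 < t) => ?_)
    have ht0 : 0 < t := one_pos.trans ht
    have : 0 < a * t ^ d := mul_pos ha (pow_pos ht0 d)
    rw [norm_of_nonneg (bose_pos hx this).le, rpow_neg ht0.le, rpow_two, ← div_eq_mul_inv,
      div_div]
    refine (bose_le_div_sq hx this).trans (div_le_div_of_nonneg_left (by norm_num)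
      (by positivity) ?_)
    have : t ^ 2 ≤ (t ^ d) ^ 2 := pow_le_pow_left₀ ht0.le (le_self_pow₀ ht.le hd) 2
    rw [mul_pow, mul_assoc]
    gcongr

end Bose

lemma abs_eval_sub_leadingCoeff_mul_pow_le (Q : ℝ[X]) {t : ℝ} (ht : 1 ≤ t) :
    |Q.eval t - Q.leadingCoeff * t ^ Q.natDegree| ≤
      (∑ i ∈ Finset.range Q.natDegree, |Q.coeff i|) * t ^ (Q.natDegree - 1) := by
  rw [eval_eq_sum_range, Finset.sum_range_succ, leadingCoeff, add_sub_cancel_right,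
    Finset.sum_mul]
  refine (Finset.abs_sum_le_sum_abs _ _).trans (Finset.sum_le_sum fun i hi => ?_)
  rw [abs_mul, abs_of_nonneg (pow_nonneg (zero_le_one.trans ht) i)]
  gcongr
  exact Nat.le_sub_one_of_lt (Finset.mem_range.1 hi)

lemma exists_shift_sandwich (Q : ℝ[X]) (hd : Q.natDegree ≠ 0) (ha : 0 < Q.leadingCoeff) :
    ∃ B : ℕ, 1 ≤ B ∧ ∀ t : ℝ, B ≤ t →
      Q.leadingCoeff * (t - B) ^ Q.natDegree ≤ Q.eval t ∧
        Q.eval t ≤ Q.leadingCoeff * (t + B) ^ Q.natDegree := by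
  set a := Q.leadingCoeff
  set d := Q.natDegree
  set K := ∑ i ∈ Finset.range d, |Q.coeff i|
  obtain ⟨B, hB⟩ := exists_nat_ge (max (K / a) 1)
  rw [max_le_iff, div_le_iff₀ ha] at hB
  refine ⟨B, by exact_mod_cast hB.2, fun t ht => ?_⟩
  -- the error `K t^(d-1) ≤ a B t^(d-1)` is absorbed by `±((t ± B)^d - t^d) ≥ B t^(d-1)`
  have hdiff : |Q.eval t - a * t ^ d| ≤ K * t ^ (d - 1) :=
    abs_eval_sub_leadingCoeff_mul_pow_le Q (hB.2.trans ht)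
  have hKt : K * t ^ (d - 1) ≤ a * B * t ^ (d - 1) := by
    have : 0 ≤ t := by linarith
    gcongr
    linarith
  have hlow : (t - B) ^ d ≤ t ^ d - B * t ^ (d - 1) :=
    calc (t - B) ^ d = (t - B) ^ (d - 1) * (t - B) := (pow_sub_one_mul hd _).symm
      _ ≤ t ^ (d - 1) * (t - B) := by gcongr; linarith
      _ = t ^ d - B * t ^ (d - 1) := by rw [← pow_sub_one_mul hd t]; ring
  have hup : t ^ d + B * t ^ (d - 1) ≤ (t + B) ^ d :=
    calc t ^ d + B * t ^ (d - 1) = t ^ (d - 1) * (t + B) := by rw [← pow_sub_one_mul hd t]; ring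
      _ ≤ (t + B) ^ (d - 1) * (t + B) := by gcongr <;> linarith
      _ = (t + B) ^ d := pow_sub_one_mul hd _
  constructor <;> nlinarith [abs_le.1 hdiff]

lemma abs_tsum_sub_integral_le_of_sandwich {g : ℝ → ℝ} {u : ℕ → ℝ} {M : ℝ} {N K L : ℕ}
    (hK : 1 ≤ K) (hL : 1 ≤ L) (anti : AntitoneOn g (Ioi 0)) (integrable : IntegrableOn g (Ioi 0))
    (hg_nonneg : ∀ t ∈ Ioi 0, 0 ≤ g t) (hg_le : ∀ t ∈ Ioi 0, g t ≤ M)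
    (hu_nonneg : ∀ n, 0 ≤ u n) (hu_le : ∀ n, u n ≤ M)
    (lower : ∀ n : ℕ, g (n + L : ℕ) ≤ u (n + N))
    (upper : ∀ n : ℕ, u (n + N) ≤ g (n + K + 1 : ℕ)) :
    |∑' n, u n - ∫ t in Ioi 0, g t| ≤ (N + L) * M := by
  have hK0 : (0 : ℝ) < K := by exact_mod_cast hK
  have hL0 : (0 : ℝ) < L := by exact_mod_cast hL
  have anti_K : AntitoneOn g (Ici (K : ℝ)) := anti.mono fun t ht => hK0.trans_le ht
  have int_K : IntegrableOn g (Ioi (K : ℝ)) := integrable.mono_set (Ioi_subset_Ioi hK0.le)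
  have nonneg_K : ∀ t ∈ Ioi (K : ℝ), 0 ≤ g t := fun t ht => hg_nonneg t (hK0.trans ht)
  have hg_summable : Summable fun n : ℕ => g n := anti_K.summable_of_integrableOn_Ioi int_K nonneg_K
  have hg_tail : Summable fun n : ℕ => g (n + K + 1 : ℕ) :=
    (summable_nat_add_iff (K + 1)).2 hg_summable
  have hu_tail : Summable fun n => u (n + N) :=
    hg_tail.of_nonneg_of_le (fun n => hu_nonneg _) upper
  rw [← ((summable_nat_add_iff N).1 hu_tail).sum_add_tsum_nat_add N, abs_le]
  have head_le : ∑ i ∈ Finset.range N, u i ≤ N * M := by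
    simpa using Finset.sum_le_sum fun i (_ : i ∈ Finset.range N) => hu_le i
  have head_nonneg : 0 ≤ ∑ i ∈ Finset.range N, u i := Finset.sum_nonneg fun i _ => hu_nonneg i
  have hM : 0 ≤ M := (hu_nonneg 0).trans (hu_le 0)
  have hNM : 0 ≤ N * M := mul_nonneg N.cast_nonneg hM
  have hLM : 0 ≤ L * M := mul_nonneg L.cast_nonneg hM
  rw [add_mul]
  constructor
  · have split : ∫ t in Ioi 0, g t = (∫ t in Ioc 0 (L : ℝ), g t) + ∫ t in Ioi (L : ℝ), g t := by
      rw [← Ioc_union_Ioi_eq_Ioi hL0.le]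
      exact setIntegral_union (Ioc_disjoint_Ioi le_rfl) measurableSet_Ioi
        (integrable.mono_set Ioc_subset_Ioi_self) (integrable.mono_set (Ioi_subset_Ioi hL0.le))
    have head_int : ∫ t in Ioc 0 (L : ℝ), g t ≤ L * M :=
      calc ∫ t in Ioc 0 (L : ℝ), g t ≤ ∫ t in Ioc 0 (L : ℝ), M :=
            setIntegral_mono_on (integrable.mono_set Ioc_subset_Ioi_self)
              (integrableOn_const measure_Ioc_lt_top.ne) measurableSet_Ioc
              fun t ht => hg_le t ht.1
        _ = L * M := by simp [Real.volume_real_Ioc]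
    have tail_int : ∫ t in Ioi (L : ℝ), g t ≤ ∑' n, u (n + N) :=
      calc ∫ t in Ioi (L : ℝ), g t ≤ ∑' n : ℕ, g (n + L : ℕ) :=
            (anti.mono fun t ht => hL0.trans_le ht).integral_le_tsum_comp_add L hg_summable
              fun t ht => hg_nonneg t (hL0.trans ht)
        _ ≤ ∑' n, u (n + N) := (hg_summable.comp_injective (add_left_injective L)).tsum_le_tsum
              lower hu_tail
    linarith
  · have tail_le : ∑' n, u (n + N) ≤ ∫ t in Ioi 0, g t :=
      calc ∑' n, u (n + N) ≤ ∑' n : ℕ, g (n + K + 1 : ℕ) := hu_tail.tsum_le_tsum upper hg_tail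
        _ ≤ ∫ t in Ioi (K : ℝ), g t := anti_K.tsum_comp_add_le_integral K int_K nonneg_K
        _ ≤ ∫ t in Ioi 0, g t := setIntegral_mono_set integrable
              (ae_restrict_of_forall_mem measurableSet_Ioi hg_nonneg)
              (Ioi_subset_Ioi hK0.le).eventuallyLE
    linarith

lemma hasSum_exp_neg_mul_nat_add_one {z : ℝ} (hz : 0 < z) :
    HasSum (fun n : ℕ => exp (-((n + 1) * z))) (exp z - 1)⁻¹ := by
  have hq : exp (-z) < 1 := exp_lt_one_iff.2 (neg_lt_zero.2 hz)
  have geom := (hasSum_geometric_of_lt_one (exp_pos _).le hq).mul_left (exp (-z))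
  have hterm : ∀ n : ℕ, exp (-z) * exp (-z) ^ n = exp (-((n + 1) * z)) := fun n => by
    rw [← exp_nat_mul, ← exp_add]; ring_nf
  have hval : exp (-z) * (1 - exp (-z))⁻¹ = (exp z - 1)⁻¹ := by
    have := exp_sub_one_pos_of_pos hz
    rw [exp_neg]; field_simp
  simpa only [hterm, hval] using geom

lemma summable_nat_add_one_rpow {s : ℝ} (hs : s < -1) :
    Summable fun n : ℕ => ((n : ℝ) + 1) ^ s := by
  simpa using (summable_nat_add_iff 1).2 (Real.summable_nat_rpow.2 hs)

lemma integral_rpow_div_exp_sub_one {p : ℝ} (hp : 0 < p) :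
    ∫ z in Ioi 0, z ^ p / (exp z - 1) = Gamma (1 + p) * ∑' n : ℕ, ((n : ℝ) + 1) ^ (-(1 + p)) := by
  have hn : ∀ n : ℕ, (0 : ℝ) < n + 1 := fun n => n.cast_add_one_pos
  set F : ℕ → ℝ → ℝ := fun n z => z ^ p * exp (-((n + 1) * z))
  have integral_F : ∀ n, ∫ z in Ioi 0, F n z = ((n : ℝ) + 1) ^ (-(1 + p)) * Gamma (1 + p) := by
    intro n
    have := integral_rpow_mul_exp_neg_mul_Ioi (by linarith : 0 < 1 + p) (hn n)
    rwa [add_sub_cancel_left, one_div, inv_rpow (hn n).le, ← rpow_neg (hn n).le] at this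
  have F_int : ∀ n, IntegrableOn (F n) (Ioi 0) := fun n =>
    (integrableOn_rpow_mul_exp_neg_mul_rpow (by linarith : -1 < p) one_pos (hn n)).congr_fun
      (fun z _ => by simp only [F, rpow_one, neg_mul]) measurableSet_Ioi
  have integral_norm_F : ∀ n, ∫ z in Ioi 0, ‖F n z‖ = ((n : ℝ) + 1) ^ (-(1 + p)) * Gamma (1 + p) :=
    fun n => (setIntegral_congr_fun measurableSet_Ioi fun z (hz : 0 < z) =>
      norm_of_nonneg (by positivity)).trans (integral_F n)
  have hζ := summable_nat_add_one_rpow (by linarith : -(1 + p) < -1)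
  have hsum := hasSum_integral_of_summable_integral_norm F_int
    (by simpa only [integral_norm_F] using hζ.mul_right (Gamma (1 + p)))
  have tsum_F : ∀ z ∈ Ioi (0 : ℝ), ∑' n, F n z = z ^ p / (exp z - 1) := fun z hz =>
    ((hasSum_exp_neg_mul_nat_add_one hz).mul_left (z ^ p)).tsum_eq
  rw [← setIntegral_congr_fun measurableSet_Ioi tsum_F, ← hsum.tsum_eq, tsum_congr integral_F,
    tsum_mul_right, mul_comm]

lemma integral_bose_mul_pow {a x : ℝ} {d : ℕ} (hd : d ≠ 0) (ha : 0 < a) (hx : 0 < x) :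
    ∫ t in Ioi 0, bose x (a * t ^ d) =
      Gamma (1 + 1 / d) * (∑' n : ℕ, ((n : ℝ) + 1) ^ (-(1 + 1 / d : ℝ))) /
        (d * a ^ (1 / d : ℝ) * x ^ (1 + 1 / d : ℝ)) := by
  set p : ℝ := 1 / d
  have hd0 : (0 : ℝ) < d := by positivity
  have hp : 0 < p := by positivity
  have hax : 0 < a * x := mul_pos ha hx
  -- substitute `t = y ^ p`, then `y = z / (a x)`
  have integrand : ∀ y ∈ Ioi (0 : ℝ), (p * y ^ (p - 1)) • bose x (a * (y ^ p) ^ d) =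
      p * a * (a * x) ^ (-p) * ((a * x * y) ^ p / (exp (a * x * y) - 1)) := fun y (hy : 0 < y) => by
    have hpow : (y ^ p) ^ d = y := by
      rw [← rpow_natCast, ← rpow_mul hy.le, one_div_mul_cancel hd0.ne', rpow_one]
    rw [hpow, smul_eq_mul, bose, mul_rpow hax.le hy.le, rpow_sub_one hy.ne', rpow_neg hax.le,
      mul_right_comm a y x]
    have : 0 < (a * x) ^ p := by positivity
    field_simp
  rw [← integral_comp_rpow_Ioi_of_pos hp, setIntegral_congr_fun measurableSet_Ioi integrand,
    integral_const_mul, integral_comp_mul_left_Ioi (fun z => z ^ p / (exp z - 1)) 0 hax, mul_zero,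
    integral_rpow_div_exp_sub_one hp, smul_eq_mul, mul_rpow ha.le hx.le, rpow_neg ha.le,
    rpow_neg hx.le, rpow_add hx, rpow_one]
  have : 0 < a ^ p := by positivity
  have : 0 < x ^ p := by positivity
  field_simp
  linear_combination (∑' n : ℕ, ((n : ℝ) + 1) ^ (-(1 + p))) * one_div_mul_cancel hd0.ne'

lemma riemannZeta_ofReal_eq_tsum {s : ℝ} (hs : 1 < s) :
    riemannZeta s = ((∑' n : ℕ, ((n : ℝ) + 1) ^ (-s) : ℝ) : ℂ) := by
  rw [zeta_eq_tsum_one_div_nat_add_one_cpow (by simpa), Complex.ofReal_tsum]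
  refine tsum_congr fun n => ?_
  rw [rpow_neg (by positivity), Complex.ofReal_inv, Complex.ofReal_cpow (by positivity), one_div]
  push_cast
  rfl

theorem abs_tsum_bose_sub_integral_le (Q : ℝ[X]) (hd : Q.natDegree ≠ 0)
    (ha : 0 < Q.leadingCoeff) (hpos : ∀ n : ℕ, 0 < Q.eval ((n : ℝ) + 1)) :
    ∃ C : ℝ, 0 < C ∧ ∀ x : ℝ, 0 < x →
      |∑' n : ℕ, bose x (Q.eval ((n : ℝ) + 1)) -
          ∫ t in Ioi 0, bose x (Q.leadingCoeff * t ^ Q.natDegree)| ≤ C * x⁻¹ := by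
  obtain ⟨B, hB, sandwich⟩ := exists_shift_sandwich Q hd ha
  refine ⟨5 * B + 1, by positivity, fun x hx => ?_⟩
  set a := Q.leadingCoeff
  set d := Q.natDegree
  have hg_pos : ∀ t : ℝ, 0 < t → 0 < a * t ^ d := fun t ht => by positivity
  -- the terms with index `n + 2B` lie between `g (n + 2B + 1 ± B)`
  have shifted : ∀ n : ℕ, a * ((n + B + 1 : ℕ) : ℝ) ^ d ≤ Q.eval (((n + 2 * B : ℕ) : ℝ) + 1) ∧
      Q.eval (((n + 2 * B : ℕ) : ℝ) + 1) ≤ a * ((n + (3 * B + 1) : ℕ) : ℝ) ^ d := by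
    intro n
    have h := sandwich (((n + 2 * B : ℕ) : ℝ) + 1) (by push_cast; linarith [n.cast_nonneg (α := ℝ)])
    convert h using 3 <;> push_cast <;> ring
  refine (abs_tsum_sub_integral_le_of_sandwich (N := 2 * B) (K := B) (L := 3 * B + 1) hB
    (by omega)
    (fun s hs t ht hst => bose_antitoneOn hx (hg_pos s hs) (hg_pos t ht) (by gcongr; exact hs.le))
    (integrableOn_bose_mul_pow hd ha hx) (fun t ht => (bose_pos hx (hg_pos t ht)).le)
    (fun t ht => bose_le_inv hx (hg_pos t ht)) (fun n => (bose_pos hx (hpos n)).le)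
    (fun n => bose_le_inv hx (hpos n))
    (fun n => bose_antitoneOn hx (hpos _) (hg_pos _ (by positivity)) (shifted n).2)
    (fun n => bose_antitoneOn hx (hg_pos _ (by positivity)) (hpos _) (shifted n).1)).trans_eq ?_
  push_cast
  ring

theorem stmt14_general (r : ℕ) (hr : 1 ≤ r) (P : Polynomial ℚ) (hPdeg : P.natDegree = r)
    (hPlc : 0 < P.leadingCoeff)
    (f : ℤ → ℤ) (hfP : ∀ ℓ : ℤ, (f ℓ : ℚ) = P.eval (ℓ : ℚ))
    (hfpos : ∀ ℓ : ℤ, 1 ≤ ℓ → 0 < f ℓ) :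
    ∃ C x₀ : ℝ, 0 < C ∧ 0 < x₀ ∧
      ∀ x : ℝ, 0 < x → x < x₀ →
        ‖((∑' ℓ : ℕ, (f ((ℓ : ℤ) + 1) : ℝ) /
              (Real.exp ((f ((ℓ : ℤ) + 1) : ℝ) * x) - 1) : ℝ) : ℂ) -
            riemannZeta (1 + 1 / (r : ℂ)) * Complex.Gamma (1 + 1 / (r : ℂ)) /
              (((r : ℝ) * (P.leadingCoeff : ℝ) ^ ((1 : ℝ) / r) *
                x ^ (1 + (1 : ℝ) / r) : ℝ) : ℂ)‖ ≤
          C * x ^ (-1 - (1 : ℝ) / (2 * r)) := by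
  set Q := P.map (Rat.castHom ℝ)
  have hQf : ∀ n : ℕ, Q.eval ((n : ℝ) + 1) = f ((n : ℤ) + 1) := fun n => by
    have hP := eval_intCast_map (Rat.castHom ℝ) P ((n : ℤ) + 1)
    have hf := hfP ((n : ℤ) + 1)
    push_cast at hP hf
    rw [hP, ← hf, map_intCast]
  have hQdeg : Q.natDegree = r := (natDegree_map _).trans hPdeg
  have hQlc : Q.leadingCoeff = (P.leadingCoeff : ℝ) := leadingCoeff_map _
  obtain ⟨C, hC, bound⟩ := abs_tsum_bose_sub_integral_le Q (by omega)
    (by rw [hQlc]; exact_mod_cast hPlc)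
    (fun n => by rw [hQf]; exact_mod_cast hfpos _ (by omega))
  refine ⟨C, 1, hC, one_pos, fun x hx hx1 => ?_⟩
  have hs : 1 < 1 + 1 / (r : ℝ) := by simp; positivity
  have key := bound x hx
  rw [hQdeg, hQlc, integral_bose_mul_pow (by omega) (by exact_mod_cast hPlc) hx] at key
  simp only [hQf, bose] at key
  rw [show (1 + 1 / (r : ℂ)) = ((1 + 1 / (r : ℝ) : ℝ) : ℂ) by push_cast; rfl,
    riemannZeta_ofReal_eq_tsum hs, Complex.Gamma_ofReal, ← Complex.ofReal_mul,
    ← Complex.ofReal_div, ← Complex.ofReal_sub, Complex.norm_real, norm_eq_abs]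
  calc _ ≤ C * x⁻¹ := by convert key using 4; ring
    _ ≤ C * x ^ (-1 - (1 : ℝ) / (2 * r)) := by
      rw [← rpow_neg_one]
      refine mul_le_mul_of_nonneg_left (rpow_le_rpow_of_exponent_ge hx hx1.le ?_) hC.le
      linarith [show 0 ≤ (1 : ℝ) / (2 * r) by positivity]

theorem stmt14 (r : ℕ) (hr : 1 ≤ r) (P : Polynomial ℚ) (hPdeg : P.natDegree = r)
    (hPlc : 0 < P.leadingCoeff)
    (f : ℤ → ℤ) (hfP : ∀ ℓ : ℤ, (f ℓ : ℚ) = P.eval (ℓ : ℚ))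
    (hfpos : ∀ ℓ : ℤ, 1 ≤ ℓ → 0 < f ℓ)
    (hfprime : ∀ p : ℕ, p.Prime → ∃ ℓ : ℤ, ¬ ((p : ℤ) ∣ f ℓ)) :
    ∃ C x₀ : ℝ, 0 < C ∧ 0 < x₀ ∧
      ∀ x : ℝ, 0 < x → x < x₀ →
        ‖((∑' ℓ : ℕ, (f ((ℓ : ℤ) + 1) : ℝ) /
              (Real.exp ((f ((ℓ : ℤ) + 1) : ℝ) * x) - 1) : ℝ) : ℂ) -
            riemannZeta (1 + 1 / (r : ℂ)) * Complex.Gamma (1 + 1 / (r : ℂ)) /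
              (((r : ℝ) * (P.leadingCoeff : ℝ) ^ ((1 : ℝ) / r) *
                x ^ (1 + (1 : ℝ) / r) : ℝ) : ℂ)‖ ≤
          C * x ^ (-1 - (1 : ℝ) / (2 * r)) :=
  stmt14_general r hr P hPdeg hPlc f hfP hfpos
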